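/- (Coercivity of the optimal amplitude as the length-scale relaxation parameter grows.) Let (R_λ)_{λ>0} be a family of real symmetric positive definite n×n matrices such that R_λ converges entrywise to eeᵀ as λ → +∞, where e = (1,…,1)ᵀ. Assume e ∈ Im F (Hypothesis H1), Hypothesis H2, σ_ε² > 0, a ∈ (1/2, 1), q > 0, 0 < δ < q, and k_ε < na, where k_ε = Card{ i ∈ {1,…,n} : (Πy)ᵢ/√(Πᵢᵢ) ≤ σ_ε q }. If s : (0,∞) → [0,∞) is any function such that for every λ > 0 the quasi-Gaussian proportion equals a, i.e. (1/n)Σᵢ₌₁ⁿ h⁺_δ(q − (K̄_λ y)ᵢ/√((K̄_λ)ᵢᵢ)) = a where K̄_λ is the matrix K̄ associated with K = s(λ)R_λ + σ_ε²Iₙ, then s(λ) → +∞ as λ → +∞. -/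

import Mathlib

open Matrix

/-- The matrix `K̄ = K⁻¹ − K⁻¹F(FᵀK⁻¹F)⁻¹FᵀK⁻¹`. -/
noncomputable def Kbar {n p : ℕ} (F : Matrix (Fin n) (Fin p) ℝ)
    (K : Matrix (Fin n) (Fin n) ℝ) : Matrix (Fin n) (Fin n) ℝ :=
  K⁻¹ - K⁻¹ * F * (Fᵀ * K⁻¹ * F)⁻¹ * Fᵀ * K⁻¹

/-- `h⁺_δ(x) = 1` if `x > δ`, `x/δ` if `0 < x ≤ δ`, `0` if `x ≤ 0`. -/
noncomputable def hplus (δ x : ℝ) : ℝ :=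
  if δ < x then 1 else if 0 < x then x / δ else 0

/-!
If `s` does not tend to `+∞`, then along some ultrafilter finer than `atTop` it converges to a
finite `c ≥ 0`, so `K_λ = s(λ) R_λ + σ² I` converges to `K₀ = σ² I + c eeᵀ`. Since `e = F w`
lies in `Im F`, the term `c eeᵀ = F (c wwᵀ) Fᵀ` is invisible to `K̄`, whence `K̄(K₀) = σ⁻² Π`.
`K̄` is continuous at the positive definite `K₀` and `Πᵢᵢ > 0` by H2, so the quasi-Gaussian
proportion, constantly equal to `a`, converges to its value at `σ⁻² Π`. There `hplus` vanishes
at every index outside the `k_ε` counted ones, so that value is at most `k_ε / n < a`.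
-/

open Filter Topology

theorem Filter.exists_ultrafilter_tendsto_of_not_tendsto_atTop {α β : Type*} [LinearOrder β]
    [TopologicalSpace β] [CompactIccSpace β] {l : Filter α} {f : α → β} {b : β}
    (hf : ¬Tendsto f l atTop) (hb : ∀ᶠ x in l, b ≤ f x) :
    ∃ 𝒰 : Ultrafilter α, ↑𝒰 ≤ l ∧ ∃ c, b ≤ c ∧ Tendsto f 𝒰 (𝓝 c) := by
  obtain ⟨M, hM⟩ : ∃ M, ∃ᶠ x in l, f x < M := by
    simpa [tendsto_atTop, not_eventually] using hf
  have : (l ⊓ 𝓟 {x | f x ∈ Set.Icc b M}).NeBot :=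
    frequently_iff_neBot.1 ((hM.and_eventually hb).mono fun x hx => ⟨hx.2, hx.1.le⟩)
  set 𝒰 := Ultrafilter.of (l ⊓ 𝓟 {x | f x ∈ Set.Icc b M})
  have h𝒰 : ↑𝒰 ≤ l ⊓ 𝓟 {x | f x ∈ Set.Icc b M} := Ultrafilter.of_le _
  obtain ⟨c, hc, hfc⟩ := isCompact_Icc.ultrafilter_le_nhds (𝒰.map f)
    (by
      rw [Ultrafilter.coe_map]
      exact tendsto_principal.2 (le_principal_iff.1 (h𝒰.trans inf_le_right)))
  exact ⟨𝒰, h𝒰.trans inf_le_left, c, hc.1, hfc⟩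

theorem Filter.Tendsto.matrix_mul {α l m n R : Type*} [Fintype m] [TopologicalSpace R]
    [NonUnitalNonAssocSemiring R] [IsTopologicalSemiring R] {f : Filter α}
    {A : α → Matrix l m R} {B : α → Matrix m n R} {A₀ : Matrix l m R} {B₀ : Matrix m n R}
    (hA : Tendsto A f (𝓝 A₀)) (hB : Tendsto B f (𝓝 B₀)) :
    Tendsto (fun x => A x * B x) f (𝓝 (A₀ * B₀)) :=
  ((continuous_fst.matrix_mul continuous_snd).tendsto (A₀, B₀)).comp (hA.prodMk_nhds hB)

theorem Matrix.continuousAt_inv_of_isUnit_det {n : Type*} [Fintype n] [DecidableEq n]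
    {A : Matrix n n ℝ} (hA : IsUnit A.det) : ContinuousAt Inv.inv A :=
  continuousAt_matrix_inv A (by
    simpa only [Ring.inverse_eq_inv'] using continuousAt_inv₀ hA.ne_zero)

theorem Matrix.smul_inv₀ {n 𝕜 : Type*} [Fintype n] [DecidableEq n] [Field 𝕜] (t : 𝕜)
    (A : Matrix n n 𝕜) : (t • A)⁻¹ = t⁻¹ • A⁻¹ := by
  rcases eq_or_ne t 0 with rfl | ht
  · simp
  by_cases hA : IsUnit A.det
  · exact Matrix.inv_smul' A (Units.mk0 t ht) hA
  · rw [nonsing_inv_apply_not_isUnit _ hA, nonsing_inv_apply_not_isUnit, smul_zero]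
    simpa [det_smul, ht] using hA

theorem Matrix.mulVec_injective_of_rank_eq {m n 𝕜 : Type*} [Fintype m] [Fintype n] [Field 𝕜]
    {A : Matrix m n 𝕜} (hA : A.rank = Fintype.card n) : Function.Injective A.mulVec := by
  have h := LinearMap.finrank_range_add_finrank_ker A.mulVecLin
  rw [← rank, hA, Module.finrank_fintype_fun_eq_card, add_eq_left,
    Submodule.finrank_eq_zero] at h
  exact LinearMap.ker_eq_bot.1 h

theorem Matrix.PosDef.isUnit_det_transpose_mul_inv_mul {m n : Type*} [Fintype m] [Fintype n]
    [DecidableEq m] [DecidableEq n] {K : Matrix n n ℝ} (hK : K.PosDef) {F : Matrix n m ℝ}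
    (hF : Function.Injective F.mulVec) : IsUnit (Fᵀ * K⁻¹ * F).det := by
  have h := hK.inv.conjTranspose_mul_mul_same hF
  rw [conjTranspose_eq_transpose_of_trivial] at h
  exact h.det_pos.ne'.isUnit

namespace Kbar

variable {n p : ℕ} (F : Matrix (Fin n) (Fin p) ℝ) {K : Matrix (Fin n) (Fin n) ℝ}

theorem mul_eq_zero (hG : IsUnit (Fᵀ * K⁻¹ * F).det) : Kbar F K * F = 0 := by
  have h := nonsing_inv_mul _ hG
  simp only [Matrix.mul_assoc] at h
  simp only [Kbar, Matrix.sub_mul, Matrix.mul_assoc, h, Matrix.mul_one, sub_self]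

theorem transpose_mul_eq_zero (hG : IsUnit (Fᵀ * K⁻¹ * F).det) : Fᵀ * Kbar F K = 0 := by
  have h := mul_nonsing_inv _ hG
  simp only [Kbar, Matrix.mul_sub, ← Matrix.mul_assoc, h, Matrix.one_mul, sub_self]

theorem mul_self (hK : IsUnit K.det) :
    Kbar F K * K = 1 - K⁻¹ * F * (Fᵀ * K⁻¹ * F)⁻¹ * Fᵀ := by
  simp only [Kbar, Matrix.sub_mul, Matrix.mul_assoc, nonsing_inv_mul _ hK, Matrix.mul_one]

theorem self_mul (hK : IsUnit K.det) :
    K * Kbar F K = 1 - F * (Fᵀ * K⁻¹ * F)⁻¹ * Fᵀ * K⁻¹ := by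
  simp only [Kbar, Matrix.mul_sub, ← Matrix.mul_assoc, mul_nonsing_inv _ hK, Matrix.one_mul]

theorem add_mul_mul_transpose (B : Matrix (Fin p) (Fin p) ℝ) (hK : IsUnit K.det)
    (hK' : IsUnit (K + F * B * Fᵀ).det) (hG : IsUnit (Fᵀ * K⁻¹ * F).det)
    (hG' : IsUnit (Fᵀ * (K + F * B * Fᵀ)⁻¹ * F).det) :
    Kbar F (K + F * B * Fᵀ) = Kbar F K := by
  -- Both sides equal `K̄(K) (K + FBFᵀ) K̄(K + FBFᵀ)`, since `K̄` kills `F` on either side.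
  have h : Kbar F K * (K + F * B * Fᵀ) = 1 - K⁻¹ * F * (Fᵀ * K⁻¹ * F)⁻¹ * Fᵀ := by
    rw [Matrix.mul_add, ← Matrix.mul_assoc, ← Matrix.mul_assoc, mul_eq_zero F hG, mul_self F hK,
      Matrix.zero_mul, Matrix.zero_mul, add_zero]
  calc Kbar F (K + F * B * Fᵀ) = Kbar F K * (K + F * B * Fᵀ) * Kbar F (K + F * B * Fᵀ) := by
        rw [h, Matrix.sub_mul, Matrix.one_mul, Matrix.mul_assoc _ Fᵀ, transpose_mul_eq_zero F hG',
          Matrix.mul_zero, sub_zero]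
    _ = Kbar F K := by
        rw [Matrix.mul_assoc, self_mul F hK']
        simp only [Matrix.mul_sub, Matrix.mul_one, ← Matrix.mul_assoc, mul_eq_zero F hG,
          Matrix.zero_mul, sub_zero]

theorem smul (t : ℝ) (K : Matrix (Fin n) (Fin n) ℝ) : Kbar F (t • K) = t⁻¹ • Kbar F K := by
  simp only [Kbar, Matrix.smul_inv₀, Matrix.smul_mul, Matrix.mul_smul, smul_smul, smul_sub,
    inv_inv]
  congr 2
  rcases eq_or_ne t 0 with rfl | ht
  · simp
  · field_simp

theorem one : Kbar F 1 = 1 - F * (Fᵀ * F)⁻¹ * Fᵀ := by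
  simp [Kbar]

theorem continuousAt (hK : IsUnit K.det) (hG : IsUnit (Fᵀ * K⁻¹ * F).det) :
    ContinuousAt (Kbar F) K := by
  have hinv : Tendsto Inv.inv (𝓝 K) (𝓝 K⁻¹) := continuousAt_inv_of_isUnit_det hK
  have hGinv : Tendsto (fun L : Matrix (Fin n) (Fin n) ℝ => (Fᵀ * L⁻¹ * F)⁻¹) (𝓝 K)
      (𝓝 (Fᵀ * K⁻¹ * F)⁻¹) :=
    (continuousAt_inv_of_isUnit_det hG).tendsto.comp
      ((tendsto_const_nhds.matrix_mul hinv).matrix_mul tendsto_const_nhds)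
  exact hinv.sub (((((hinv.matrix_mul tendsto_const_nhds).matrix_mul hGinv).matrix_mul
    tendsto_const_nhds).matrix_mul hinv))

theorem transpose_eq (hK : Kᵀ = K) : (Kbar F K)ᵀ = Kbar F K := by
  simp only [Kbar, transpose_sub, transpose_mul, transpose_nonsing_inv, hK, transpose_transpose,
    Matrix.mul_assoc]

theorem one_transpose_mul_self (hG : IsUnit (Fᵀ * F).det) :
    (Kbar F 1)ᵀ * Kbar F 1 = Kbar F 1 := by
  have hG₁ : IsUnit (Fᵀ * (1 : Matrix (Fin n) (Fin n) ℝ)⁻¹ * F).det := by simpa using hG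
  have h₁ : Kbar F 1 = 1 - F * (Fᵀ * (1 : Matrix (Fin n) (Fin n) ℝ)⁻¹ * F)⁻¹ * Fᵀ * 1⁻¹ := by
    simpa using self_mul F (K := 1) (by simp)
  rw [transpose_eq F transpose_one]
  conv_lhs => arg 2; rw [h₁]
  simp only [Matrix.mul_sub, Matrix.mul_one, ← Matrix.mul_assoc, mul_eq_zero F hG₁,
    Matrix.zero_mul, sub_zero]

theorem one_diag_pos (hG : IsUnit (Fᵀ * F).det) {i : Fin n}
    (hi : Pi.single i 1 ∉ LinearMap.range F.mulVecLin) : 0 < Kbar F 1 i i := by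
  -- `Π` is an orthogonal projection, so `Πᵢᵢ = ‖Π eᵢ‖²`, and `Π eᵢ = 0` would put `eᵢ` in `Im F`.
  have hcol : Kbar F 1 *ᵥ Pi.single i 1 ≠ 0 := by
    intro h0
    rw [one F, sub_mulVec, one_mulVec, sub_eq_zero] at h0
    exact hi ⟨((Fᵀ * F)⁻¹ * Fᵀ) *ᵥ Pi.single i 1, by
      rw [mulVecLin_apply, mulVec_mulVec, ← Matrix.mul_assoc, ← h0]⟩
  rw [← one_transpose_mul_self F hG, mul_apply']
  have h := dotProduct_star_self_pos_iff.2 hcol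
  rw [star_trivial, mulVec_single_one] at h
  exact h

end Kbar

theorem hplus_eq_max_min {δ : ℝ} (hδ : 0 < δ) (x : ℝ) : hplus δ x = max 0 (min 1 (x / δ)) := by
  unfold hplus
  split_ifs with h₁ h₂
  · rw [min_eq_left ((one_le_div hδ).2 h₁.le), max_eq_right zero_le_one]
  · rw [min_eq_right ((div_le_one hδ).2 (not_lt.1 h₁)), max_eq_right (by positivity)]
  · exact (max_eq_left ((min_le_right _ _).trans
      (div_nonpos_of_nonpos_of_nonneg (not_lt.1 h₂) hδ.le))).symm

theorem continuous_hplus {δ : ℝ} (hδ : 0 < δ) : Continuous (hplus δ) := by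
  rw [funext (hplus_eq_max_min hδ)]
  fun_prop

theorem hplus_le_one {δ : ℝ} (hδ : 0 < δ) (x : ℝ) : hplus δ x ≤ 1 := by
  rw [hplus_eq_max_min hδ]
  exact max_le zero_le_one (min_le_left _ _)

theorem hplus_of_nonpos {δ x : ℝ} (hδ : 0 ≤ δ) (hx : x ≤ 0) : hplus δ x = 0 := by
  rw [hplus, if_neg (by linarith), if_neg (not_lt.2 hx)]

section Proportion

variable {n : ℕ}

noncomputable def standardizedResidual (M : Matrix (Fin n) (Fin n) ℝ) (y : Fin n → ℝ)
    (i : Fin n) : ℝ :=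
  (M *ᵥ y) i / √(M i i)

noncomputable def quasiGaussianProportion (δ q : ℝ) (y : Fin n → ℝ)
    (M : Matrix (Fin n) (Fin n) ℝ) : ℝ :=
  (1 / n : ℝ) * ∑ i, hplus δ (q - standardizedResidual M y i)

theorem standardizedResidual_smul {t : ℝ} (ht : 0 ≤ t) (M : Matrix (Fin n) (Fin n) ℝ)
    (y : Fin n → ℝ) (i : Fin n) :
    standardizedResidual (t • M) y i = √t * standardizedResidual M y i := by
  simp only [standardizedResidual, smul_mulVec, Pi.smul_apply, Matrix.smul_apply, smul_eq_mul]
  rw [Real.sqrt_mul ht, mul_div_mul_comm, Real.div_sqrt]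

theorem continuousAt_quasiGaussianProportion {δ : ℝ} (hδ : 0 < δ) (q : ℝ) (y : Fin n → ℝ)
    {M : Matrix (Fin n) (Fin n) ℝ} (hM : ∀ i, 0 < M i i) :
    ContinuousAt (quasiGaussianProportion δ q y) M := by
  have hres (i : Fin n) : ContinuousAt (fun M => standardizedResidual M y i) M :=
    ((continuous_apply i).comp (continuous_id.matrix_mulVec continuous_const)).continuousAt.div
      (Real.continuous_sqrt.comp (continuous_id.matrix_elem i i)).continuousAt
      (Real.sqrt_ne_zero'.2 (hM i))
  exact tendsto_const_nhds.mul (tendsto_finsetSum _ fun i _ =>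
    (continuous_hplus hδ).continuousAt.comp (continuousAt_const.sub (hres i)))

theorem quasiGaussianProportion_le {δ : ℝ} (hδ : 0 < δ) (q : ℝ) (y : Fin n → ℝ)
    (M : Matrix (Fin n) (Fin n) ℝ) :
    quasiGaussianProportion δ q y M ≤
      (Finset.univ.filter fun i => standardizedResidual M y i ≤ q).card / n := by
  calc quasiGaussianProportion δ q y M
      ≤ (1 / n : ℝ) * ∑ i, if standardizedResidual M y i ≤ q then 1 else 0 := by
        refine mul_le_mul_of_nonneg_left (Finset.sum_le_sum fun i _ => ?_) (by positivity)
        split_ifs with h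
        · exact hplus_le_one hδ _
        · exact (hplus_of_nonpos hδ.le (by linarith)).le
    _ = _ := by rw [Finset.sum_boole]; ring

theorem quasiGaussianProportion_inv_sq_smul_le {σ δ : ℝ} (hσ : 0 < σ) (hδ : 0 < δ) (q : ℝ)
    (y : Fin n → ℝ) (M : Matrix (Fin n) (Fin n) ℝ) :
    quasiGaussianProportion δ q y ((σ ^ 2)⁻¹ • M) ≤
      (Finset.univ.filter fun i => (M *ᵥ y) i / √(M i i) ≤ σ * q).card / n := by
  convert quasiGaussianProportion_le hδ q y ((σ ^ 2)⁻¹ • M) using 5 with i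
  rw [standardizedResidual_smul (by positivity), Real.sqrt_inv, Real.sqrt_sq hσ.le,
    inv_mul_le_iff₀ hσ, standardizedResidual]

end Proportion

theorem Kbar.tendsto_quasiGaussianProportion {n p : ℕ} {F : Matrix (Fin n) (Fin p) ℝ}
    (hF : Function.Injective F.mulVec)
    (hF₁ : ∀ i : Fin n, Pi.single i (1 : ℝ) ∉ LinearMap.range F.mulVecLin)
    {σ₂ : ℝ} (hσ₂ : 0 < σ₂) {B : Matrix (Fin p) (Fin p) ℝ} (hB : B.PosSemidef)
    {δ : ℝ} (hδ : 0 < δ) (q : ℝ) (y : Fin n → ℝ) :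
    Tendsto (fun K => quasiGaussianProportion δ q y (Kbar F K))
      (𝓝 (σ₂ • 1 + F * B * Fᵀ)) (𝓝 (quasiGaussianProportion δ q y (σ₂⁻¹ • Kbar F 1))) := by
  have hPD₀ : (σ₂ • (1 : Matrix (Fin n) (Fin n) ℝ)).PosDef := PosDef.one.smul hσ₂
  have hPD : (σ₂ • 1 + F * B * Fᵀ).PosDef :=
    hPD₀.add_posSemidef (hB.mul_mul_conjTranspose_same F)
  have hKbar : Kbar F (σ₂ • 1 + F * B * Fᵀ) = σ₂⁻¹ • Kbar F 1 := by
    rw [Kbar.add_mul_mul_transpose F B hPD₀.det_pos.ne'.isUnit hPD.det_pos.ne'.isUnit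
      (hPD₀.isUnit_det_transpose_mul_inv_mul hF) (hPD.isUnit_det_transpose_mul_inv_mul hF),
      Kbar.smul]
  have hdiag (i : Fin n) : 0 < (σ₂⁻¹ • Kbar F 1) i i :=
    mul_pos (inv_pos.2 hσ₂) (Kbar.one_diag_pos F
      (by simpa using PosDef.one.isUnit_det_transpose_mul_inv_mul hF) (hF₁ i))
  rw [← hKbar] at hdiag ⊢
  exact ((continuousAt_quasiGaussianProportion hδ q y hdiag).comp
    (Kbar.continuousAt F hPD.det_pos.ne'.isUnit (hPD.isUnit_det_transpose_mul_inv_mul hF)))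

theorem stmt15_general (n p : ℕ)
    (F : Matrix (Fin n) (Fin p) ℝ) (hF : F.rank = p)
    (R : ℝ → Matrix (Fin n) (Fin n) ℝ)
    (hRlim : ∀ i j : Fin n, Filter.Tendsto (fun l : ℝ => R l i j) Filter.atTop (nhds 1))
    (hH1 : (fun _ => (1 : ℝ) : Fin n → ℝ) ∈ LinearMap.range (Matrix.mulVecLin F))
    (hH2 : ∀ i : Fin n, Pi.single i (1 : ℝ) ∉ LinearMap.range (Matrix.mulVecLin F))
    (y : Fin n → ℝ) (sigeps : ℝ) (hsig : 0 < sigeps)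
    (a : ℝ)
    (q : ℝ) (δ : ℝ) (hδ : 0 < δ)
    (hke : ((Finset.univ.filter fun i : Fin n =>
        (((1 : Matrix (Fin n) (Fin n) ℝ) - F * (Fᵀ * F)⁻¹ * Fᵀ) *ᵥ y) i /
          Real.sqrt (((1 : Matrix (Fin n) (Fin n) ℝ) - F * (Fᵀ * F)⁻¹ * Fᵀ) i i)
          ≤ sigeps * q).card : ℝ) < n * a)
    (s : ℝ → ℝ) (hs0 : ∀ l : ℝ, 0 < l → 0 ≤ s l)
    (hsa : ∀ l : ℝ, 0 < l →
      (1 / n : ℝ) * ∑ i, hplus δ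
        (q - (Kbar F (s l • R l + (sigeps ^ 2) • (1 : Matrix (Fin n) (Fin n) ℝ)) *ᵥ y) i /
          Real.sqrt (Kbar F (s l • R l + (sigeps ^ 2) • (1 : Matrix (Fin n) (Fin n) ℝ)) i i))
        = a) :
    Filter.Tendsto s Filter.atTop Filter.atTop := by
  obtain ⟨w, hw⟩ := hH1
  have hFinj : Function.Injective F.mulVec := mulVec_injective_of_rank_eq (by simpa using hF)
  by_contra hs
  obtain ⟨𝒰, h𝒰, c, hc, hsc⟩ :=
    exists_ultrafilter_tendsto_of_not_tendsto_atTop hs ((eventually_gt_atTop 0).mono hs0)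
  have hR : Tendsto R atTop (𝓝 (F * vecMulVec w w * Fᵀ)) := by
    rw [mul_vecMulVec, vecMulVec_mul, vecMul_transpose, ← mulVecLin_apply, hw]
    exact tendsto_pi_nhds.2 fun i => tendsto_pi_nhds.2 fun j => by
      simpa [vecMulVec_apply] using hRlim i j
  have hK : Tendsto (fun l => s l • R l + sigeps ^ 2 • (1 : Matrix (Fin n) (Fin n) ℝ)) 𝒰
      (𝓝 (sigeps ^ 2 • 1 + F * (c • vecMulVec w w) * Fᵀ)) := by
    rw [add_comm, Matrix.mul_smul, Matrix.smul_mul]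
    exact (hsc.smul (hR.mono_left h𝒰)).add tendsto_const_nhds
  have hlim : a = quasiGaussianProportion δ q y ((sigeps ^ 2)⁻¹ • Kbar F 1) :=
    tendsto_nhds_unique (tendsto_const_nhds.congr'
        (((eventually_gt_atTop 0).filter_mono h𝒰).mono fun l hl => (hsa l hl).symm))
      ((Kbar.tendsto_quasiGaussianProportion hFinj hH2 (by positivity)
        ((posSemidef_vecMulVec_self_star w).smul hc) hδ q y).comp hK)
  have hn : (0 : ℝ) < n := Nat.cast_pos.2 (Nat.pos_of_ne_zero fun h => by subst h; simp at hke)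
  have hcount := quasiGaussianProportion_inv_sq_smul_le hsig hδ q y (Kbar F 1)
  rw [← hlim, Kbar.one, le_div_iff₀ hn] at hcount
  linarith

/-- Coercivity of the optimal amplitude: if `R_λ → eeᵀ` entrywise as
`λ → ∞` and `s(λ)` matches the quasi-Gaussian proportion `a` for every
`λ > 0`, then `s(λ) → +∞`. -/
theorem stmt15 (n p : ℕ) (hp : 0 < p) (hpn : p < n)
    (F : Matrix (Fin n) (Fin p) ℝ) (hF : F.rank = p)
    (R : ℝ → Matrix (Fin n) (Fin n) ℝ)
    (hRpd : ∀ l : ℝ, 0 < l → (R l).PosDef)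
    (hRlim : ∀ i j : Fin n, Filter.Tendsto (fun l : ℝ => R l i j) Filter.atTop (nhds 1))
    (hH1 : (fun _ => (1 : ℝ) : Fin n → ℝ) ∈ LinearMap.range (Matrix.mulVecLin F))
    (hH2 : ∀ i : Fin n, Pi.single i (1 : ℝ) ∉ LinearMap.range (Matrix.mulVecLin F))
    (y : Fin n → ℝ) (sigeps : ℝ) (hsig : 0 < sigeps)
    (a : ℝ) (ha : a ∈ Set.Ioo (1 / 2 : ℝ) 1)
    (q : ℝ) (hq : 0 < q) (δ : ℝ) (hδ : 0 < δ) (hδq : δ < q)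
    (hke : ((Finset.univ.filter fun i : Fin n =>
        (((1 : Matrix (Fin n) (Fin n) ℝ) - F * (Fᵀ * F)⁻¹ * Fᵀ) *ᵥ y) i /
          Real.sqrt (((1 : Matrix (Fin n) (Fin n) ℝ) - F * (Fᵀ * F)⁻¹ * Fᵀ) i i)
          ≤ sigeps * q).card : ℝ) < n * a)
    (s : ℝ → ℝ) (hs0 : ∀ l : ℝ, 0 < l → 0 ≤ s l)
    (hsa : ∀ l : ℝ, 0 < l →
      (1 / n : ℝ) * ∑ i, hplus δ
        (q - (Kbar F (s l • R l + (sigeps ^ 2) • (1 : Matrix (Fin n) (Fin n) ℝ)) *ᵥ y) i /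
          Real.sqrt (Kbar F (s l • R l + (sigeps ^ 2) • (1 : Matrix (Fin n) (Fin n) ℝ)) i i))
        = a) :
    Filter.Tendsto s Filter.atTop Filter.atTop :=
  stmt15_general n p F hF R hRlim hH1 hH2 y sigeps hsig a q δ hδ hke s hs0 hsa
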